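/- arXiv:1809.10868 — 2 statements merged into one kernel-verified Lean document; each statement's English description precedes it below -/
import Mathlib

section
/- Let n ≥ 1, let V be a real vector space of dimension 2n, and let ω be an element of the degree-2 component of the exterior algebra ⋀ V with ω^n ≠ 0. Let r, s, r', s' be natural numbers with s ≤ n, s' ≤ n, and 2r + s + 2r' + s' = 2n. Let B be an element of the degree-s component ⋀^s V with ω^{n−s+1} ∧ B = 0 (B is primitive), and let B' be an element of the degree-s' component ⋀^{s'} V with ω^{n−s'+1} ∧ B' = 0 (B' is primitive). If ω^r ∧ B ∧ ω^{r'} ∧ B' ≠ 0 in ⋀^{2n} V, then s' = s and r' = n − r − s. -/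
open ExteriorAlgebra in
/-- Degree-2 elements of the exterior algebra are central. -/
lemma degree_two_central {R M : Type*} [CommRing R] [AddCommGroup M] [Module R M]
    {x : ExteriorAlgebra R M} (hx : x ∈ ⋀[R]^2 M) (y : ExteriorAlgebra R M) :
    Commute x y := by
  induction y using ExteriorAlgebra.induction with
  | algebraMap r => exact (Algebra.commutes r x).symm
  | ι v =>
    have hx2 : x ∈ LinearMap.range (ι R : M →ₗ[R] ExteriorAlgebra R M) *
        LinearMap.range (ι R : M →ₗ[R] ExteriorAlgebra R M) := by
      rwa [← sq]
    refine Submodule.mul_induction_on hx2 ?_ ?_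
    · rintro _ ⟨a, rfl⟩ _ ⟨b, rfl⟩
      have hav : ι R a * ι R v = -(ι R v * ι R a) :=
        eq_neg_of_add_eq_zero_left (ι_add_mul_swap a v)
      have hbv : ι R b * ι R v = -(ι R v * ι R b) :=
        eq_neg_of_add_eq_zero_left (ι_add_mul_swap b v)
      show ι R a * ι R b * ι R v = ι R v * (ι R a * ι R b)
      rw [mul_assoc, hbv, mul_neg, ← mul_assoc, hav, neg_mul, neg_neg, mul_assoc]
    · intro a b ha hb
      exact ha.add_left hb
  | mul a b ha hb => exact ha.mul_right hb
  | add a b ha hb => exact ha.add_right hb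

/-- Pointwise version of Proposition 4.2: on a `2n`-dimensional real vector space `V` with a
nondegenerate `2`-form `ω` (i.e. `ω ^ n ≠ 0` in the exterior algebra), if `B ∈ ⋀^s V` and
`B' ∈ ⋀^{s'} V` are primitive, `2r + s + 2r' + s' = 2n`, and
`ω^r ∧ B ∧ ω^{r'} ∧ B' ≠ 0`, then `s' = s` and `r' = n - r - s`. -/
theorem primitive_pairing_nonzero (n : ℕ) (hn : 1 ≤ n)
    (V : Type*) [AddCommGroup V] [Module ℝ V]
    (hdim : Module.finrank ℝ V = 2 * n)
    (ω : ExteriorAlgebra ℝ V) (hω : ω ∈ ⋀[ℝ]^2 V) (hnd : ω ^ n ≠ 0)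
    (r s r' s' : ℕ) (hs : s ≤ n) (hs' : s' ≤ n)
    (hdeg : 2 * r + s + 2 * r' + s' = 2 * n)
    (B : ExteriorAlgebra ℝ V) (hB : B ∈ ⋀[ℝ]^s V)
    (hBprim : ω ^ (n - s + 1) * B = 0)
    (B' : ExteriorAlgebra ℝ V) (hB' : B' ∈ ⋀[ℝ]^s' V)
    (hB'prim : ω ^ (n - s' + 1) * B' = 0)
    (hne : ω ^ r * B * (ω ^ r' * B') ≠ 0) :
    s' = s ∧ r' = n - r - s := by
  have hc : ∀ y, Commute ω y := degree_two_central hω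
  have key : ω ^ r * B * (ω ^ r' * B') = ω ^ (r + r') * (B * B') := by
    rw [mul_assoc, ← mul_assoc B, ← ((hc B).pow_left r').eq, mul_assoc, ← mul_assoc, ← pow_add]
  have hss : s' = s := by
    by_contra h
    rcases Nat.lt_or_ge s' s with hlt | hge
    · -- s' < s : r + r' ≥ n - s + 1 so ω^(r+r') * B = 0
      have h1 : r + r' = (r + r' - (n - s + 1)) + (n - s + 1) := by omega
      have hz : ω ^ (r + r') * B = 0 := by
        rw [h1, pow_add, mul_assoc, hBprim, mul_zero]
      exact hne (by rw [key, ← mul_assoc, hz, zero_mul])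
    · -- s < s' : r + r' ≥ n - s' + 1 so ω^(r+r') * B' = 0
      have hlt' : s < s' := lt_of_le_of_ne hge (Ne.symm h)
      have h1 : r + r' = (r + r' - (n - s' + 1)) + (n - s' + 1) := by omega
      have hz : ω ^ (r + r') * B' = 0 := by
        rw [h1, pow_add, mul_assoc, hB'prim, mul_zero]
      have : ω ^ (r + r') * (B * B') = 0 := by
        rw [← mul_assoc, ((hc B).pow_left (r + r')).eq, mul_assoc, hz, mul_zero]
      exact hne (by rw [key, this])
  subst hss
  exact ⟨rfl, by omega⟩
end

section
/- Let n ≥ 1, let V be a real vector space of dimension 2n, and let ω be an element of the degree-2 component of the exterior algebra ⋀ V with ω^n ≠ 0. Let r, s, r', s' be natural numbers with s ≤ n, s' ≤ n, 2r + s + 2r' + s' = 2n, and s < s'. Let B be an element of the degree-s component ⋀^s V with ω^{n−s+1} ∧ B = 0 (B is primitive), and let B' be an element of the degree-s' component ⋀^{s'} V with ω^{n−s'+1} ∧ B' = 0 (B' is primitive). Then ω^{r+r'} ∧ B ∧ B' = 0 in ⋀^{2n} V. -/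
private lemma exterior_sq_mul_iota_comm {V : Type*} [AddCommGroup V] [Module ℝ V]
    {m : ℕ} {ω : ExteriorAlgebra ℝ V} (hω : ω ∈ ⋀[ℝ]^m V) (c : V) :
    ω * ExteriorAlgebra.ι ℝ c = ((-1 : ℝ) ^ m) • (ExteriorAlgebra.ι ℝ c * ω) := by
  induction hω using Submodule.pow_induction_on_left' with
  | algebraMap r => simp [Algebra.commutes]
  | add x y i hx hy ihx ihy => simp [add_mul, mul_add, ihx, ihy]
  | mem_mul m' hm i x hx ih =>
      obtain ⟨a, rfl⟩ := hm
      have swap : ExteriorAlgebra.ι ℝ a * ExteriorAlgebra.ι ℝ c =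
          -(ExteriorAlgebra.ι ℝ c * ExteriorAlgebra.ι ℝ a) :=
        eq_neg_of_add_eq_zero_left (ExteriorAlgebra.ι_add_mul_swap a c)
      calc ExteriorAlgebra.ι ℝ a * x * ExteriorAlgebra.ι ℝ c
          = ExteriorAlgebra.ι ℝ a * (x * ExteriorAlgebra.ι ℝ c) := by rw [mul_assoc]
        _ = ((-1 : ℝ) ^ i) • (ExteriorAlgebra.ι ℝ a * ExteriorAlgebra.ι ℝ c * x) := by
            rw [ih, mul_smul_comm, mul_assoc]
        _ = ((-1 : ℝ) ^ (i + 1)) • (ExteriorAlgebra.ι ℝ c * (ExteriorAlgebra.ι ℝ a * x)) := by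
            rw [swap, pow_succ]
            simp [mul_smul, mul_assoc]

private lemma exterior_sq_central {V : Type*} [AddCommGroup V] [Module ℝ V]
    {ω : ExteriorAlgebra ℝ V} (hω : ω ∈ ⋀[ℝ]^2 V) (z : ExteriorAlgebra ℝ V) :
    ω * z = z * ω := by
  induction z using ExteriorAlgebra.induction with
  | algebraMap r => exact (Algebra.commutes r ω).symm
  | ι c => simpa using exterior_sq_mul_iota_comm hω c
  | mul x y hx hy => rw [← mul_assoc, hx, mul_assoc, hy, mul_assoc]
  | add x y hx hy => rw [mul_add, hx, hy, add_mul]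

/-- Pointwise vanishing statement from the proof of Proposition 4.2: on a `2n`-dimensional
real vector space `V` with a nondegenerate `2`-form `ω` (i.e. `ω ^ n ≠ 0` in the exterior
algebra), if `B ∈ ⋀^s V` and `B' ∈ ⋀^{s'} V` are primitive, `2r + s + 2r' + s' = 2n`, and
`s < s'`, then `ω^{r+r'} ∧ B ∧ B' = 0`. -/
theorem primitive_pairing_vanishes (n : ℕ) (hn : 1 ≤ n)
    (V : Type*) [AddCommGroup V] [Module ℝ V]
    (hdim : Module.finrank ℝ V = 2 * n)
    (ω : ExteriorAlgebra ℝ V) (hω : ω ∈ ⋀[ℝ]^2 V) (hnd : ω ^ n ≠ 0)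
    (r s r' s' : ℕ) (hs : s ≤ n) (hs' : s' ≤ n)
    (hdeg : 2 * r + s + 2 * r' + s' = 2 * n) (hlt : s < s')
    (B : ExteriorAlgebra ℝ V) (hB : B ∈ ⋀[ℝ]^s V)
    (hBprim : ω ^ (n - s + 1) * B = 0)
    (B' : ExteriorAlgebra ℝ V) (hB' : B' ∈ ⋀[ℝ]^s' V)
    (hB'prim : ω ^ (n - s' + 1) * B' = 0) :
    ω ^ (r + r') * B * B' = 0 := by
  have hcomm : ∀ (k : ℕ) (z : ExteriorAlgebra ℝ V), ω ^ k * z = z * ω ^ k := by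
    intro k z
    induction k with
    | zero => simp
    | succ k ih =>
        rw [pow_succ, mul_assoc, exterior_sq_central hω z, ← mul_assoc, ih, mul_assoc]
  obtain ⟨k, hk⟩ : ∃ k, r + r' = k + (n - s' + 1) := by
    refine ⟨r + r' - (n - s' + 1), ?_⟩
    omega
  have key : ω ^ (n - s' + 1) * (B * B') = B * (ω ^ (n - s' + 1) * B') := by
    rw [← mul_assoc, hcomm (n - s' + 1) B, mul_assoc]
  rw [hk, pow_add, mul_assoc, mul_assoc, key, hB'prim, mul_zero, mul_zero]
end
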